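/- Define h : ℝ → ℝ by h(ℓ) = cos ℓ + (1/4)·sin ℓ − 1, and let ℓ₀ = 2·arctan(1/4). Then h(ℓ) > 0 for all ℓ ∈ (0, ℓ₀) and h(ℓ) < 0 for all ℓ ∈ (ℓ₀, 2π). -/
import Mathlib

open Real

lemma perigee_aux_pos {x : ℝ} (hx0 : 0 < x) (hx : x < Real.arctan (1/4)) :
    Real.sin x < (1/4) * Real.cos x := by
  have hx2 : x < Real.pi / 2 := hx.trans (Real.arctan_lt_pi_div_two _)
  have hcos : 0 < Real.cos x :=
    Real.cos_pos_of_mem_Ioo ⟨by linarith [Real.pi_pos], hx2⟩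
  have htan : Real.tan x < Real.tan (Real.arctan (1/4)) := by
    apply Real.strictMonoOn_tan ⟨by linarith [Real.pi_pos], hx2⟩
      ⟨by linarith [Real.pi_pos, (Real.arctan_zero ▸ Real.arctan_strictMono (by norm_num : (0:ℝ) < 1/4))],
        Real.arctan_lt_pi_div_two _⟩ hx
  rw [Real.tan_arctan, Real.tan_eq_sin_div_cos, div_lt_iff₀ hcos] at htan
  linarith

lemma perigee_aux_neg {x : ℝ} (hx : Real.arctan (1/4) < x) (hx2 : x < Real.pi) :
    (1/4) * Real.cos x < Real.sin x := by
  rcases lt_or_ge x (Real.pi / 2) with h | h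
  · have hcos : 0 < Real.cos x := by
      have ha : (0:ℝ) < Real.arctan (1/4) :=
        Real.arctan_zero ▸ Real.arctan_strictMono (by norm_num : (0:ℝ) < 1/4)
      exact Real.cos_pos_of_mem_Ioo ⟨by linarith [Real.pi_pos], h⟩
    have htan : Real.tan (Real.arctan (1/4)) < Real.tan x := by
      have ha : (0:ℝ) < Real.arctan (1/4) :=
        Real.arctan_zero ▸ Real.arctan_strictMono (by norm_num : (0:ℝ) < 1/4)
      apply Real.strictMonoOn_tan
        ⟨by linarith [Real.pi_pos], Real.arctan_lt_pi_div_two _⟩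
        ⟨by linarith [Real.pi_pos], h⟩ hx
    rw [Real.tan_arctan, Real.tan_eq_sin_div_cos, lt_div_iff₀ hcos] at htan
    linarith
  · have hsin : 0 < Real.sin x := by
      apply Real.sin_pos_of_pos_of_lt_pi _ hx2
      linarith [Real.pi_pos, (Real.arctan_zero ▸ Real.arctan_strictMono (by norm_num : (0:ℝ) < 1/4))]
    have hcos : Real.cos x ≤ 0 := Real.cos_nonpos_of_pi_div_two_le_of_le h (by linarith)
    nlinarith

/-- Sign structure of the perigee event-detection function
`h(ℓ) = cos ℓ + (1/4)·sin ℓ − 1`: it is positive on `(0, ℓ₀)` and negative on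
`(ℓ₀, 2π)`, where `ℓ₀ = 2·arctan(1/4)`. -/
theorem perigee_event_function_sign :
    (∀ l ∈ Set.Ioo (0 : ℝ) (2 * Real.arctan (1 / 4)),
      0 < Real.cos l + (1 / 4) * Real.sin l - 1) ∧
    (∀ l ∈ Set.Ioo (2 * Real.arctan (1 / 4)) (2 * Real.pi),
      Real.cos l + (1 / 4) * Real.sin l - 1 < 0) := by
  have key : ∀ l : ℝ, Real.cos l + (1/4) * Real.sin l - 1
      = 2 * Real.sin (l/2) * ((1/4) * Real.cos (l/2) - Real.sin (l/2)) := by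
    intro l
    have h1 : Real.cos l = 1 - 2 * Real.sin (l/2) ^ 2 := by
      have h := Real.cos_two_mul (l/2)
      rw [show 2 * (l/2) = l by ring] at h
      have := Real.sin_sq_add_cos_sq (l/2)
      nlinarith
    have h2 : Real.sin l = 2 * Real.sin (l/2) * Real.cos (l/2) := by
      have := Real.sin_two_mul (l/2)
      rw [show 2 * (l/2) = l by ring] at this
      linarith
    rw [h1, h2]; ring
  constructor
  · rintro l ⟨hl0, hl1⟩
    rw [key]
    have hs : 0 < Real.sin (l/2) := by
      apply Real.sin_pos_of_pos_of_lt_pi (by linarith)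
      have h1 : l/2 < Real.arctan (1/4) := by linarith
      have := Real.arctan_lt_pi_div_two (1/4 : ℝ)
      linarith [Real.pi_pos]
    have := perigee_aux_pos (by linarith : (0:ℝ) < l/2) (by linarith)
    nlinarith
  · rintro l ⟨hl0, hl1⟩
    rw [key]
    have ha := (Real.arctan_zero ▸ Real.arctan_strictMono (by norm_num : (0:ℝ) < 1/4))
    have hs : 0 < Real.sin (l/2) := by
      apply Real.sin_pos_of_pos_of_lt_pi (by linarith) (by linarith)
    have := perigee_aux_neg (by linarith : Real.arctan (1/4) < l/2) (by linarith)
    nlinarith
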